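/- Let B(Q) = 1/2 + (1/2)√(Q(1 − 3Q/2)) − (√2/4)(1 − 3Q). Then for all Q ∈ [0, 1/6], B(Q) ≤ 1/2, B is increasing on [0, 1/6], and B(1/6) = 1/2. -/

import Mathlib

/-- The SARG two-photon phase-error bound `B(Q) = 1/2 + (1/2)√(Q(1 − 3Q/2)) − (√2/4)(1 − 3Q)`. -/
noncomputable def Bsarg (Q : ℝ) : ℝ :=
  1 / 2 + (1 / 2) * Real.sqrt (Q * (1 - 3 * Q / 2)) - (Real.sqrt 2 / 4) * (1 - 3 * Q)

open Set

-- `(1/2)(1 - 3Q)² - Q(1 - 3Q/2) = (1 - 2Q)(1 - 6Q)/2`, which vanishes at `Q = 1/6`.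
theorem sqrt_mul_one_sub_le {Q : ℝ} (hQ : Q ≤ 1 / 6) :
    Real.sqrt (Q * (1 - 3 * Q / 2)) ≤ Real.sqrt 2 / 2 * (1 - 3 * Q) := by
  rw [Real.sqrt_le_iff, mul_pow, div_pow, Real.sq_sqrt zero_le_two]
  constructor
  · have : 0 ≤ 1 - 3 * Q := by linarith
    positivity
  · nlinarith

theorem Bsarg_le_half {Q : ℝ} (hQ : Q ≤ 1 / 6) : Bsarg Q ≤ 1 / 2 := by
  have := sqrt_mul_one_sub_le hQ
  unfold Bsarg
  linarith

theorem strictMonoOn_mul_one_sub : StrictMonoOn (fun Q : ℝ => Q * (1 - 3 * Q / 2)) (Iic (1 / 3)) :=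
  fun _ _ b (hb : b ≤ 1 / 3) hab => by nlinarith

theorem strictMonoOn_Bsarg : StrictMonoOn Bsarg (Icc 0 (1 / 3)) := by
  intro a ha b hb hab
  have hsqrt : Real.sqrt (a * (1 - 3 * a / 2)) < Real.sqrt (b * (1 - 3 * b / 2)) :=
    Real.sqrt_lt_sqrt (by nlinarith [ha.1, ha.2])
      (strictMonoOn_mul_one_sub (Icc_subset_Iic_self ha) (Icc_subset_Iic_self hb) hab)
  have hlin : 0 < Real.sqrt 2 / 4 * (b - a) := by
    have : 0 < b - a := sub_pos.2 hab
    positivity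
  unfold Bsarg
  linarith

theorem Bsarg_one_sixth : Bsarg (1 / 6) = 1 / 2 := by
  have h : (1 / 6 : ℝ) * (1 - 3 * (1 / 6) / 2) = (Real.sqrt 2 / 4) ^ 2 := by
    rw [div_pow, Real.sq_sqrt zero_le_two]
    norm_num
  rw [Bsarg, h, Real.sqrt_sq (by positivity)]
  ring

/-- For all `Q ∈ [0, 1/6]`: `B(Q) ≤ 1/2`, `B` is increasing on `[0, 1/6]`, and `B(1/6) = 1/2`. -/
theorem Bsarg_properties :
    (∀ Q ∈ Set.Icc (0 : ℝ) (1 / 6), Bsarg Q ≤ 1 / 2) ∧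
    StrictMonoOn Bsarg (Set.Icc (0 : ℝ) (1 / 6)) ∧
    Bsarg (1 / 6) = 1 / 2 :=
  ⟨fun _ hQ => Bsarg_le_half hQ.2,
    strictMonoOn_Bsarg.mono (Icc_subset_Icc_right (by norm_num)),
    Bsarg_one_sixth⟩
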